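/- In a graph with an end of finite vertex-degree k, there is no family of k+1 rays of that end that pairwise intersect in only finitely many vertices. -/

import Mathlib

open SimpleGraph

variable {V : Type*}

/-- A ray in `G`: an injective sequence of vertices with consecutive vertices adjacent. -/
def IsRay (G : SimpleGraph V) (f : ℕ → V) : Prop :=
  Function.Injective f ∧ ∀ n, G.Adj (f n) (f (n + 1))

/-- A double ray in `G`: an injective two-way infinite sequence with consecutive
vertices adjacent. -/
def IsDoubleRay (G : SimpleGraph V) (f : ℤ → V) : Prop :=
  Function.Injective f ∧ ∀ n, G.Adj (f n) (f (n + 1))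

/-- The edges used by a ray. -/
def rayEdges (f : ℕ → V) : Set (Sym2 V) := {e | ∃ n, e = s(f n, f (n + 1))}

/-- The edges used by a double ray. -/
def drEdges (f : ℤ → V) : Set (Sym2 V) := {e | ∃ n : ℤ, e = s(f n, f (n + 1))}

/-- Two rays are equivalent (belong to the same end) iff no finite vertex set
separates them: for every finite `S` there are tails of both rays avoiding `S`
which are joined by a walk avoiding `S`. -/
def RayEquiv (G : SimpleGraph V) (f g : ℕ → V) : Prop :=
  ∀ S : Finset V, ∃ a b, (∀ i, a ≤ i → f i ∉ S) ∧ (∀ j, b ≤ j → g j ∉ S) ∧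
    ∃ w : G.Walk (f a) (g b), ∀ v ∈ w.support, v ∉ S

/-- The forward ray of a double ray. -/
def drFwd (f : ℤ → V) : ℕ → V := fun n => f n

/-- The backward ray of a double ray. -/
def drBwd (f : ℤ → V) : ℕ → V := fun n => f (-(n : ℤ) - 1)

/-- The end (represented by the ray `R`) has vertex-degree exactly `k`:
there are `k` pairwise vertex-disjoint rays equivalent to `R`, but not `k + 1`. -/
def EndVertexDegree (G : SimpleGraph V) (R : ℕ → V) (k : ℕ) : Prop :=
  (∃ F : Fin k → ℕ → V, (∀ i, IsRay G (F i) ∧ RayEquiv G R (F i)) ∧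
      Pairwise fun i j => Disjoint (Set.range (F i)) (Set.range (F j))) ∧
  ¬ ∃ F : Fin (k + 1) → ℕ → V, (∀ i, IsRay G (F i) ∧ RayEquiv G R (F i)) ∧
      Pairwise fun i j => Disjoint (Set.range (F i)) (Set.range (F j))

/-! Truncating rays to a common tail keeps them rays of the same end, and, because the family is
finite and each pairwise intersection is finite and met only finitely often by an injective
sequence, some common truncation makes them pairwise disjoint — contradicting the maximality of
`k` in `EndVertexDegree`. -/

open Filter Set

lemma IsRay.tail {G : SimpleGraph V} {f : ℕ → V} (hf : IsRay G f) (N : ℕ) :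
    IsRay G fun n => f (N + n) :=
  ⟨fun _ _ hab => Nat.add_left_cancel (hf.1 hab), fun n => hf.2 (N + n)⟩

/-- Separating by `S` together with the first `N` vertices of `f` forces the tail of `f` given by
`RayEquiv` to start at or after `N`. -/
lemma RayEquiv.tail {G : SimpleGraph V} {W f : ℕ → V} (h : RayEquiv G W f) (N : ℕ) :
    RayEquiv G W fun n => f (N + n) := by
  classical
  intro S
  obtain ⟨a, b, hWa, hfb, w, hw⟩ := h (S ∪ (Finset.range N).image f)
  have hNb : N ≤ b := by
    by_contra! hb
    exact hfb b le_rfl (Finset.mem_union_right _ (Finset.mem_image_of_mem f (Finset.mem_range.2 hb)))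
  have hb : b = N + (b - N) := by omega
  refine ⟨a, b - N, fun i hi hS => hWa i hi (Finset.mem_union_left _ hS),
    fun j hj hS => hfb (N + j) (by omega) (Finset.mem_union_left _ hS),
    w.copy rfl (congrArg f hb), fun v hv hS => ?_⟩
  rw [Walk.support_copy] at hv
  exact hw v hv (Finset.mem_union_left _ hS)

lemma eventually_notMem_range_of_finite_inter {α : Type*} {f g : ℕ → α}
    (hf : Function.Injective f) (h : (range f ∩ range g).Finite) :
    ∀ᶠ n in atTop, f n ∉ range g := by
  rw [← Nat.cofinite_eq_atTop]
  filter_upwards [(h.preimage hf.injOn).eventually_cofinite_notMem] with n hn hg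
  exact hn ⟨mem_range_self n, hg⟩

lemma exists_tails_pairwise_disjoint {α ι : Type*} [Finite ι] {F : ι → ℕ → α}
    (hinj : ∀ i, Function.Injective (F i))
    (hfin : Pairwise fun i j => (range (F i) ∩ range (F j)).Finite) :
    ∃ N, Pairwise fun i j => Disjoint (range fun n => F i (N + n)) (range fun n => F j (N + n)) := by
  have hev : ∀ᶠ n in atTop, ∀ i j, i ≠ j → F i n ∉ range (F j) :=
    eventually_all.2 fun i => eventually_all.2 fun j => by
      by_cases hij : i = j
      · exact Eventually.of_forall fun _ h => absurd hij h
      · exact (eventually_notMem_range_of_finite_inter (hinj i) (hfin hij)).mono fun _ h _ => h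
  obtain ⟨N, hN⟩ := eventually_atTop.1 hev
  refine ⟨N, fun i j hij => disjoint_left.2 ?_⟩
  rintro _ ⟨n, rfl⟩ ⟨m, hm⟩
  exact hN (N + n) (Nat.le_add_right N n) i j hij ⟨N + m, hm⟩

theorem stmt_8_general (G : SimpleGraph V) (W : ℕ → V) (k : ℕ)
    (hdeg : EndVertexDegree G W k) :
    ¬ ∃ F : Fin (k + 1) → ℕ → V, (∀ i, IsRay G (F i) ∧ RayEquiv G W (F i)) ∧
      Pairwise fun i j => (Set.range (F i) ∩ Set.range (F j)).Finite := by
  rintro ⟨F, hF, hfin⟩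
  obtain ⟨N, hdisj⟩ := exists_tails_pairwise_disjoint (fun i => (hF i).1.1) hfin
  exact hdeg.2 ⟨fun i n => F i (N + n), fun i => ⟨(hF i).1.tail N, (hF i).2.tail N⟩, hdisj⟩

/-- In a graph with an end of finite vertex-degree `k` there is no family of
`k + 1` rays of that end pairwise intersecting in only finitely many vertices. -/
theorem stmt_8 (G : SimpleGraph V) (W : ℕ → V) (k : ℕ) (hW : IsRay G W)
    (hdeg : EndVertexDegree G W k) :
    ¬ ∃ F : Fin (k + 1) → ℕ → V, (∀ i, IsRay G (F i) ∧ RayEquiv G W (F i)) ∧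
      Pairwise fun i j => (Set.range (F i) ∩ Set.range (F j)).Finite :=
  stmt_8_general G W k hdeg
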